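/- Let R be a commutative ring, φ : R → R a ring endomorphism such that R is free of finite rank as a module over φ(R) via φ, with basis a_1,…,a_q, i.e. R = ⊕_{i=1}^q a_i·φ(R). Then φ : R → R, viewed as a ring map, is faithfully flat provided Spec R is connected. -/

import Mathlib

open TensorProduct

/-- Type synonym: `M` with the `R`-module structure twisted by `φ` (i.e. `r • m = φ r • m`).
For `M = R` this is "`R` viewed as an `R`-module via `φ`". -/
@[nolint unusedArguments]
def Twist (R : Type*) [CommRing R] (φ : R →+* R) (M : Type*) [AddCommGroup M] [Module R M] :
    Type _ := M

namespace Twist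

variable {R : Type*} [CommRing R] (φ : R →+* R) {M : Type*} [AddCommGroup M] [Module R M]

instance : AddCommGroup (Twist R φ M) := inferInstanceAs (AddCommGroup M)

instance : Module R (Twist R φ M) := Module.compHom M φ

theorem smul_def (r : R) (m : M) :
    (r • (show Twist R φ M from m)) = (show Twist R φ M from (φ r • m)) := rfl

end Twist

/-- The linearization `R ⊗_{φ,R} M → M`, `x ⊗ m ↦ x • φM m`, of a `φ`-semilinear map
`φM : M → M`.  It is `R`-linear when the left tensor factor and the target carry the
`φ`-twisted module structures.  An étale `φ`-module is a finite module `M` for which this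
map is bijective. -/
noncomputable def linearization {R : Type*} [CommRing R] (φ : R →+* R)
    {M : Type*} [AddCommGroup M] [Module R M] (φM : M →ₛₗ[φ] M) :
    TensorProduct R (Twist R φ R) M →ₗ[R] Twist R φ M :=
  TensorProduct.lift
    { toFun := fun x =>
        { toFun := fun m => show Twist R φ M from (show R from x) • φM m
          map_add' := fun a b => by
            show ((show R from x) • φM (a + b) : M) = (show R from x) • φM a + (show R from x) • φM b
            rw [map_add]
            exact smul_add (show R from x) (φM a) (φM b)
          map_smul' := fun r m => by
            show ((show R from x) • φM (r • m) : M) = φ r • ((show R from x) • φM m)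
            rw [LinearMap.map_smulₛₗ, smul_comm] }
      map_add' := fun x y => by
        ext m
        show ((show R from x) + (show R from y)) • φM m = (show R from x) • φM m + (show R from y) • φM m
        exact add_smul (show R from x) (show R from y) (φM m)
      map_smul' := fun r x => by
        ext m
        show (φ r * (show R from x)) • φM m = (φ r • ((show R from x) • φM m) : M)
        exact mul_smul (φ r) (show R from x) (φM m) }

/-
The expansions `x = ∑ i, a i * φ (c i)` say exactly that `a` is a basis of `R` viewed as an
`R`-module via `φ`. A free module is faithfully flat as soon as it is nonzero, and over the zero
ring every flat module is faithfully flat.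
-/

theorem Module.FaithfullyFlat.of_subsingleton (R M : Type*) [CommRing R] [Subsingleton R]
    [AddCommGroup M] [Module R M] [Module.Flat R M] : Module.FaithfullyFlat R M :=
  ⟨fun _ hm => (hm.ne_top (Subsingleton.elim _ _)).elim⟩

namespace Twist

variable {R : Type*} [CommRing R] (φ : R →+* R) {ι : Type*} [Fintype ι]

theorem linearCombination_apply (a c : ι → R) :
    (Fintype.linearCombination R (fun i => (show Twist R φ R from a i)) c : R) =
      ∑ i, a i * φ (c i) := by
  show ∑ i, φ (c i) * a i = _
  exact Finset.sum_congr rfl fun i _ => mul_comm _ _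

theorem bijective_linearCombination_of_existsUnique (a : ι → R)
    (h : ∀ x : R, ∃! c : ι → R, x = ∑ i, a i * φ (c i)) :
    Function.Bijective (Fintype.linearCombination R (fun i => (show Twist R φ R from a i))) := by
  refine ⟨fun c d hcd => (h _).unique rfl ?_, fun x => ?_⟩
  · rw [← linearCombination_apply, ← linearCombination_apply]
    exact congrArg (fun y : Twist R φ R => (y : R)) hcd
  · obtain ⟨c, hc, -⟩ := h x
    exact ⟨c, (linearCombination_apply φ a c).trans hc.symm⟩

noncomputable def basisOfExistsUnique (a : ι → R)
    (h : ∀ x : R, ∃! c : ι → R, x = ∑ i, a i * φ (c i)) : Module.Basis ι R (Twist R φ R) :=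
  .ofEquivFun (LinearEquiv.ofBijective _ (bijective_linearCombination_of_existsUnique φ a h)).symm

end Twist

theorem statement_6_general {R : Type*} [CommRing R] (φ : R →+* R)
    (q : ℕ) (a : Fin q → R)
    (hbasis : ∀ x : R, ∃! c : Fin q → R, x = ∑ i, a i * φ (c i)) :
    Module.FaithfullyFlat R (Twist R φ R) := by
  have : Module.Free R (Twist R φ R) := .of_basis (Twist.basisOfExistsUnique φ a hbasis)
  rcases subsingleton_or_nontrivial R with hR | hR
  · exact .of_subsingleton R _
  · have : Nontrivial (Twist R φ R) := hR
    infer_instance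

/-- Let `R` be a commutative ring and `φ : R → R` an injective ring
endomorphism such that `R = ⊕_{i=1}^q a_i · φ(R)` is free of finite rank `q ≥ 1` over
`φ(R)` with basis `a₁, …, a_q`.  If `Spec R` is connected, then `φ` (i.e. the `R`-algebra
`R` via `φ`, here `Twist R φ R`) is faithfully flat. -/
theorem statement_6 {R : Type*} [CommRing R] (φ : R →+* R)
    (hφinj : Function.Injective φ)
    (q : ℕ) (hq : 1 ≤ q) (a : Fin q → R)
    (hbasis : ∀ x : R, ∃! c : Fin q → R, x = ∑ i, a i * φ (c i))
    (hconn : ConnectedSpace (PrimeSpectrum R)) :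
    Module.FaithfullyFlat R (Twist R φ R) :=
  statement_6_general φ q a hbasis
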